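/- Let T be an expandable partial reachability tree of a one-dimensional BVASS. Then for every node u of T, either T(u) is reachable, or the subtree of T rooted at u is not expandable. In particular, the root label T(ε) is reachable. -/

import Mathlib

/-- A one-dimensional branching vector addition system with states:
branching transitions `br`, unary transitions `un` with update in `{-1,0,1}`,
and final states `final`. -/
structure BVASS1 (Q : Type) where
  br : Q → Q → Q → Prop
  un : Q → ℤ → Q → Prop
  un_small : ∀ q z p, un q z p → z = -1 ∨ z = 0 ∨ z = 1
  final : Q → Prop

/-- A finite binary tree with nodes given by a prefix-closed set of words over
`Bool` and labels in `Q × ℕ`. -/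
structure BTree (Q : Type) where
  dom : Set (List Bool)
  label : List Bool → Q × ℕ
  finite : dom.Finite
  root_mem : ([] : List Bool) ∈ dom
  prefixClosed : ∀ ⦃u v : List Bool⦄, v ∈ dom → u <+: v → u ∈ dom

/-- `u` is a strict ancestor of `v`. -/
def StrictPrefix (u v : List Bool) : Prop := u <+: v ∧ u ≠ v

/-- `u` is the lowest common ancestor of `v` and `w`. -/
def IsLCA (u v w : List Bool) : Prop :=
  u <+: v ∧ u <+: w ∧ ∀ u', u' <+: v → u' <+: w → u' <+: u

namespace BTree

variable {Q : Type}

def state (T : BTree Q) (u : List Bool) : Q := (T.label u).1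

def counter (T : BTree Q) (u : List Bool) : ℕ := (T.label u).2

def IsLeaf (T : BTree Q) (u : List Bool) : Prop :=
  u ∈ T.dom ∧ ∀ b : Bool, u ++ [b] ∉ T.dom

/-- The subtree of `T` rooted at node `u`. -/
def subtree (T : BTree Q) (u : List Bool) (hu : u ∈ T.dom) : BTree Q where
  dom := {x | u ++ x ∈ T.dom}
  label := fun x => T.label (u ++ x)
  finite := Set.Finite.preimage
    (Function.Injective.injOn fun a b h => by simpa using h) T.finite
  root_mem := by simpa using hu
  prefixClosed := by
    rintro a c hc ⟨t, rfl⟩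
    exact T.prefixClosed hc ⟨t, by simp⟩

/-- All counter values in the tree are at most `j`. -/
def Bounded (T : BTree Q) (j : ℕ) : Prop := ∀ u ∈ T.dom, T.counter u ≤ j

/-- All counter values, except possibly the root's, are at most `j`. -/
def AlmostBounded (T : BTree Q) (j : ℕ) : Prop :=
  ∀ u ∈ T.dom, u ≠ [] → T.counter u ≤ j

/-- A node is increasing if it has a strict ancestor with the same state
and a strictly smaller counter value. -/
def Increasing (T : BTree Q) (v : List Bool) : Prop :=
  ∃ u ∈ T.dom, StrictPrefix u v ∧ T.state u = T.state v ∧ T.counter u < T.counter v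

/-- `u` is the anchor of the increasing node `v`: the maximal strict ancestor of `v`
with the same state and strictly smaller counter value. -/
def IsAnchorOf (T : BTree Q) (u v : List Bool) : Prop :=
  u ∈ T.dom ∧ StrictPrefix u v ∧ T.state u = T.state v ∧ T.counter u < T.counter v ∧
    ∀ u' ∈ T.dom, StrictPrefix u' v → T.state u' = T.state v →
      T.counter u' < T.counter v → u' <+: u

/-- The tree is exclusive: the least common ancestor of any two distinct increasing
leaves is a strict ancestor of at least one of their anchors. -/
def Exclusive (T : BTree Q) : Prop :=
  ∀ v w, T.IsLeaf v → T.IsLeaf w → T.Increasing v → T.Increasing w → v ≠ w →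
    ∀ a b l, T.IsAnchorOf a v → T.IsAnchorOf b w → IsLCA l v w →
      StrictPrefix l a ∨ StrictPrefix l b

end BTree

namespace BVASS1

variable {Q : Type}

/-- `T` is a partial reachability tree of `B`: at every inner node either a
branching transition splits the counter over two children, or a unary transition
changes the counter by `z` along a single-child edge. -/
def IsPRT (B : BVASS1 Q) (T : BTree Q) : Prop :=
  ∀ u ∈ T.dom, ¬ T.IsLeaf u →
    ((u ++ [false] ∈ T.dom ∧ u ++ [true] ∈ T.dom ∧
        B.br (T.state u) (T.state (u ++ [false])) (T.state (u ++ [true])) ∧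
        T.counter u = T.counter (u ++ [false]) + T.counter (u ++ [true])) ∨
     (u ++ [false] ∈ T.dom ∧ u ++ [true] ∉ T.dom ∧
        ∃ z : ℤ, B.un (T.state u) z (T.state (u ++ [false])) ∧
          (T.counter (u ++ [false]) : ℤ) = (T.counter u : ℤ) + z))

/-- `T` is a (full) reachability tree of `B`: a partial reachability tree all of
whose leaves are accepting (final state, counter zero). -/
def IsRT (B : BVASS1 Q) (T : BTree Q) : Prop :=
  B.IsPRT T ∧ ∀ u, T.IsLeaf u → B.final (T.state u) ∧ T.counter u = 0

/-- The configuration `q(n)` is reachable. -/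
def Reachable (B : BVASS1 Q) (q : Q) (n : ℕ) : Prop :=
  ∃ T : BTree Q, B.IsRT T ∧ T.label [] = (q, n)

/-- The reachability set of a control state. -/
def reachSet (B : BVASS1 Q) (q : Q) : Set ℕ := {n | B.Reachable q n}

/-- The configuration `q(n)` is coverable. -/
def Coverable (B : BVASS1 Q) (q : Q) (n : ℕ) : Prop :=
  ∃ m, n ≤ m ∧ B.Reachable q m

/-- `T` is expandable: exclusive, every leaf is accepting or increasing, and every
increasing leaf with its anchor induces a positive residue-reachability instance. -/
def Expandable (B : BVASS1 Q) (T : BTree Q) : Prop :=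
  T.Exclusive ∧
  (∀ v, T.IsLeaf v → (B.final (T.state v) ∧ T.counter v = 0) ∨ T.Increasing v) ∧
  (∀ v u, T.IsLeaf v → T.IsAnchorOf u v →
    ∃ l, B.Reachable (T.state v) l ∧ T.counter v ≤ l ∧
      l ≡ T.counter v [MOD T.counter v - T.counter u])

end BVASS1

/-!
Induct over the nodes `p` of the tree, bottom-up, under the invariant that every increasing
leaf below `p` has its anchor at or below `p`. A leaf satisfying the invariant cannot be
increasing, so it is accepting. If `p` is the anchor of an increasing leaf `v`, with labels
`q(m)` and `q(n)`, exclusivity places the anchor of every leaf hanging off the path from `p`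
to `v` strictly inside its own side subtree, so the side children are reachable by induction.
Replaying the path above them carries any surplus `Δ` from `v` to `p`: `q(n + Δ)` reachable
gives `q(m + Δ)` reachable. Starting from the reachable `q(l)` with `l = n + k·(n - m)` and
descending `k` times yields `q(m)`. Otherwise the invariant passes to the children and the
transition at `p` combines their reachability.
-/

theorem of_modEq_of_shift_down {R : ℕ → Prop} {m n l : ℕ}
    (hshift : ∀ Δ, R (n + Δ) → R (m + Δ)) (hmn : m ≤ n) (hnl : n ≤ l)
    (hl : l ≡ n [MOD n - m]) (hR : R l) : R m := by
  obtain ⟨k, hk⟩ := (Nat.modEq_iff_dvd' hnl).1 hl.symm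
  obtain rfl : l = n + (n - m) * k := by omega
  clear hl hnl hk
  induction k with
  | zero => simpa using hshift 0 hR
  | succ k ih =>
    refine ih ?_
    have := hshift _ hR
    rwa [mul_add_one, ← add_assoc, add_right_comm, Nat.add_sub_cancel' hmn] at this

theorem StrictPrefix.length_lt {u v : List Bool} (h : StrictPrefix u v) :
    u.length < v.length :=
  lt_of_le_of_ne h.1.length_le fun hl => h.2 (h.1.eq_of_length hl)

theorem StrictPrefix.append_singleton_prefix {p u x : List Bool} {b : Bool}
    (hpu : StrictPrefix p u) (hux : u <+: x) (hpx : p ++ [b] <+: x) : p ++ [b] <+: u :=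
  List.prefix_of_prefix_length_le hpx hux (by simpa using hpu.length_lt)

theorem not_prefix_of_append_prefix {q v : List Bool} {b : Bool} (h : q ++ [b] <+: v) :
    ¬ q ++ [!b] <+: v := fun h' => by
  have := List.prefix_of_prefix_length_le h h' (by simp)
  cases b <;> simp at this

theorem isLCA_of_append_prefix {q v x : List Bool} {b : Bool}
    (hv : q ++ [b] <+: v) (hx : q ++ [!b] <+: x) : IsLCA q v x := by
  refine ⟨(List.prefix_append q [b]).trans hv, (List.prefix_append q [!b]).trans hx,
    fun u hu hux => ?_⟩
  rcases List.prefix_or_prefix_of_prefix hu hv with h | h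
  · rcases List.prefix_concat_iff.1 h with rfl | h
    · exact absurd hx (not_prefix_of_append_prefix hux)
    · exact h
  · exact absurd hx (not_prefix_of_append_prefix (h.trans hux))

namespace BTree

variable {Q : Type} {T : BTree Q}

namespace IsAnchorOf

variable {u v : List Bool}

theorem strictPrefix (h : T.IsAnchorOf u v) : StrictPrefix u v := h.2.1

theorem state_eq (h : T.IsAnchorOf u v) : T.state u = T.state v := h.2.2.1

theorem counter_lt (h : T.IsAnchorOf u v) : T.counter u < T.counter v := h.2.2.2.1

theorem increasing (h : T.IsAnchorOf u v) : T.Increasing v :=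
  ⟨u, h.1, h.strictPrefix, h.state_eq, h.counter_lt⟩

end IsAnchorOf

theorem Increasing.exists_anchor {v : List Bool} (h : T.Increasing v) :
    ∃ u, T.IsAnchorOf u v := by
  classical
  obtain ⟨u, hu, hmax⟩ := Finset.exists_max_image
    (v.inits.toFinset.filter fun u =>
      u ∈ T.dom ∧ StrictPrefix u v ∧ T.state u = T.state v ∧ T.counter u < T.counter v)
    List.length
    (by obtain ⟨u, h⟩ := h; exact ⟨u, by simpa [List.mem_inits] using ⟨h.2.1.1, h⟩⟩)
  simp only [Finset.mem_filter, List.mem_toFinset, List.mem_inits, and_imp] at hu hmax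
  obtain ⟨-, hu, hsp, hst, hc⟩ := hu
  exact ⟨u, hu, hsp, hst, hc, fun u' hu' hsp' hst' hc' =>
    List.prefix_of_prefix_length_le hsp'.1 hsp.1 (hmax u' hsp'.1 hu' hsp' hst' hc')⟩

theorem dom_induction (T : BTree Q) {P : List Bool → Prop}
    (h : ∀ p ∈ T.dom, (∀ w ∈ T.dom, StrictPrefix p w → P w) → P p) :
    ∀ p ∈ T.dom, P p := by
  obtain ⟨N, hN⟩ := (T.finite.image List.length).bddAbove
  intro p hp
  induction hk : N - p.length using Nat.strong_induction_on generalizing p with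
  | _ k ih =>
    refine h p hp fun w hw hpw => ih (N - w.length) ?_ w hw rfl
    have := hN ⟨w, hw, rfl⟩
    have := hpw.length_lt
    omega

def AnchorsBelow (T : BTree Q) (p : List Bool) : Prop :=
  ∀ x u, T.IsLeaf x → p <+: x → T.IsAnchorOf u x → p <+: u

theorem AnchorsBelow.append_singleton {p : List Bool} (h : T.AnchorsBelow p)
    (hp : ∀ v, T.IsLeaf v → ¬ T.IsAnchorOf p v) (b : Bool) :
    T.AnchorsBelow (p ++ [b]) := fun x u hx hpx hux =>
  StrictPrefix.append_singleton_prefix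
    ⟨h x u hx ((List.prefix_append p [b]).trans hpx) hux, fun e => hp x hx (e ▸ hux)⟩
    hux.strictPrefix.1 hpx

theorem anchorsBelow_of_branch (hT : T.Exclusive) {p q v : List Bool} {b : Bool}
    (hv : T.IsLeaf v) (hpv : T.IsAnchorOf p v) (hpq : p <+: q) (hqv : q ++ [b] <+: v) :
    T.AnchorsBelow (q ++ [!b]) := by
  intro x u hx hqx hux
  have hvx : v ≠ x := by
    rintro rfl
    exact not_prefix_of_append_prefix hqv hqx
  rcases hT v x hv hx hpv.increasing hux.increasing hvx p u q hpv hux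
    (isLCA_of_append_prefix hqv hqx) with hqp | hqu
  · have := hqp.length_lt
    have := hpq.length_le
    omega
  · exact hqu.append_singleton_prefix hux.strictPrefix.1 hqx

def node (a : Q × ℕ) (c : Bool → Option (BTree Q)) : BTree Q where
  dom := insert [] (⋃ b, ⋃ T ∈ c b, List.cons b '' T.dom)
  label
    | [] => a
    | b :: y => ((c b).map fun T => T.label y).getD a
  finite := (Set.finite_iUnion fun b => by
    cases c b
    · simp
    · simpa using (BTree.finite _).image _).insert []
  root_mem := Set.mem_insert _ _
  prefixClosed := by
    rintro u v (rfl | hv) huv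
    · exact List.prefix_nil.1 huv ▸ Set.mem_insert _ _
    simp only [Set.mem_iUnion, Set.mem_image] at hv
    obtain ⟨b, T, hT, y, hy, rfl⟩ := hv
    cases u with
    | nil => exact Set.mem_insert _ _
    | cons b' u =>
      obtain ⟨rfl, hu⟩ := List.cons_prefix_cons.1 huv
      simp only [Set.mem_insert_iff, Set.mem_iUnion, Set.mem_image]
      exact Or.inr ⟨b', T, hT, u, T.prefixClosed hy hu, rfl⟩

variable {a : Q × ℕ} {c : Bool → Option (BTree Q)}

@[simp] theorem mem_node_cons {b : Bool} {y : List Bool} :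
    b :: y ∈ (node a c).dom ↔ ∃ T ∈ c b, y ∈ T.dom := by
  cases b <;> simp [node, and_comm]

theorem label_node_cons {b : Bool} {y : List Bool} {T : BTree Q} (h : c b = some T) :
    (node a c).label (b :: y) = T.label y := by
  simp [node, h]

theorem isLeaf_node_nil : (node a c).IsLeaf [] ↔ ∀ b, c b = none := by
  refine ⟨fun h b => ?_, fun h => ⟨root_mem _, fun b => by simp [h b]⟩⟩
  cases hb : c b with
  | none => rfl
  | some T => exact absurd (by simp [hb, T.root_mem]) (h.2 b)

theorem isLeaf_node_cons {b : Bool} {y : List Bool} {T : BTree Q} (h : c b = some T) :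
    (node a c).IsLeaf (b :: y) ↔ T.IsLeaf y := by
  simp [IsLeaf, h]

end BTree

namespace BVASS1

variable {Q : Type} {B : BVASS1 Q} {T : BTree Q}

open BTree

/-- `B.IsPRT T` unfolds to `∀ u ∈ T.dom, ¬ T.IsLeaf u → B.StepAt T u`. -/
def StepAt (B : BVASS1 Q) (T : BTree Q) (u : List Bool) : Prop :=
  (u ++ [false] ∈ T.dom ∧ u ++ [true] ∈ T.dom ∧
      B.br (T.state u) (T.state (u ++ [false])) (T.state (u ++ [true])) ∧
      T.counter u = T.counter (u ++ [false]) + T.counter (u ++ [true])) ∨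
    (u ++ [false] ∈ T.dom ∧ u ++ [true] ∉ T.dom ∧
      ∃ z : ℤ, B.un (T.state u) z (T.state (u ++ [false])) ∧
        (T.counter (u ++ [false]) : ℤ) = (T.counter u : ℤ) + z)

theorem isRT_node {a : Q × ℕ} {c : Bool → Option (BTree Q)}
    (hc : ∀ b, ∀ T ∈ c b, B.IsRT T)
    (hleaf : (∀ b, c b = none) → B.final a.1 ∧ a.2 = 0)
    (hstep : ¬ (∀ b, c b = none) → B.StepAt (node a c) []) :
    B.IsRT (node a c) := by
  refine ⟨?_, ?_⟩
  · rintro (_ | ⟨b, y⟩) hu hl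
    · exact hstep (mt isLeaf_node_nil.2 hl)
    obtain ⟨T, hT : c b = some T, hy⟩ := mem_node_cons.1 hu
    have := (hc b T hT).1 y hy (mt (isLeaf_node_cons hT).2 hl)
    simpa [StepAt, state, counter, label_node_cons hT, hT] using this
  · rintro (_ | ⟨b, y⟩) hl
    · exact hleaf (isLeaf_node_nil.1 hl)
    obtain ⟨T, hT : c b = some T, -⟩ := mem_node_cons.1 hl.1
    simpa [state, counter, label_node_cons hT] using (hc b T hT).2 y ((isLeaf_node_cons hT).1 hl)

theorem reachable_zero {q : Q} (hq : B.final q) : B.Reachable q 0 :=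
  ⟨node (q, 0) fun _ => none, isRT_node (by simp) (fun _ => ⟨hq, rfl⟩)
    (fun h => absurd (fun _ => rfl) h), rfl⟩

theorem Reachable.un {q p : Q} {z : ℤ} {n m : ℕ} (htr : B.un q z p) (hz : (m : ℤ) = n + z)
    (h : B.Reachable p m) : B.Reachable q n := by
  obtain ⟨T, hT, hroot⟩ := h
  refine ⟨node (q, n) fun b => bif b then none else some T, isRT_node ?_ ?_ ?_, rfl⟩
  · rintro (_ | _) T' hT' <;> cases hT'
    exact hT
  · intro h
    cases h false
  · intro _
    right
    refine ⟨by simp [T.root_mem], by simp, z, ?_⟩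
    show B.un q z (T.label []).1 ∧ ((T.label []).2 : ℤ) = n + z
    rw [hroot]
    exact ⟨htr, hz⟩

theorem Reachable.br {q q₁ q₂ : Q} {n₁ n₂ : ℕ} (htr : B.br q q₁ q₂)
    (h₁ : B.Reachable q₁ n₁) (h₂ : B.Reachable q₂ n₂) : B.Reachable q (n₁ + n₂) := by
  obtain ⟨T₁, hT₁, hroot₁⟩ := h₁
  obtain ⟨T₂, hT₂, hroot₂⟩ := h₂
  refine ⟨node (q, n₁ + n₂) fun b => some (bif b then T₂ else T₁), isRT_node ?_ ?_ ?_, rfl⟩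
  · rintro (_ | _) T' hT' <;> cases hT'
    exacts [hT₁, hT₂]
  · intro h
    cases h false
  · intro _
    left
    refine ⟨by simp [T₁.root_mem], by simp [T₂.root_mem], ?_⟩
    show B.br q (T₁.label []).1 (T₂.label []).1 ∧ n₁ + n₂ = (T₁.label []).2 + (T₂.label []).2
    rw [hroot₁, hroot₂]
    exact ⟨htr, rfl⟩

theorem IsPRT.subtree (hT : B.IsPRT T) {u : List Bool} (hu : u ∈ T.dom) :
    B.IsPRT (T.subtree u hu) := by
  intro x hx hl
  have hl' : ¬ T.IsLeaf (u ++ x) := fun h =>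
    hl ⟨hx, fun b hb => h.2 b (by simpa [BTree.subtree] using hb)⟩
  simpa [BTree.subtree, state, counter] using hT (u ++ x) hx hl'

theorem IsPRT.reachable_add_of_path (hT : B.IsPRT T) {p s : List Bool} (hs : p ++ s ∈ T.dom)
    (hside : ∀ q b, p <+: q → q ++ [b] <+: p ++ s → q ++ [!b] ∈ T.dom →
      B.Reachable (T.state (q ++ [!b])) (T.counter (q ++ [!b])))
    (Δ : ℕ) (h : B.Reachable (T.state (p ++ s)) (T.counter (p ++ s) + Δ)) :
    B.Reachable (T.state p) (T.counter p + Δ) := by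
  induction s generalizing p with
  | nil => simpa using h
  | cons b s ih =>
    have hpb : p ++ [b] ∈ T.dom := T.prefixClosed hs ⟨s, by simp⟩
    have hchild : B.Reachable (T.state (p ++ [b])) (T.counter (p ++ [b]) + Δ) :=
      ih (by simpa using hs)
        (fun q c hq hqc => hside q c ((List.prefix_append p [b]).trans hq) (by simpa using hqc))
        (by simpa using h)
    have hsibling := hside p b (List.prefix_refl p) ⟨s, by simp⟩
    rcases hT p (T.prefixClosed hs (List.prefix_append p _)) (fun hl => hl.2 b hpb) with
      ⟨h₀, h₁, hbr, hsum⟩ | ⟨h₀, h₁, z, hun, hz⟩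
    · cases b
      · have := hchild.br hbr (hsibling h₁)
        rwa [hsum, add_right_comm]
      · have := (hsibling h₀).br hbr hchild
        rwa [hsum, add_assoc]
    · cases b
      · exact hchild.un hun (by push_cast; omega)
      · exact absurd hpb h₁

theorem Expandable.reachable_of_anchorsBelow (hT : B.IsPRT T) (hexp : B.Expandable T) :
    ∀ p ∈ T.dom, T.AnchorsBelow p → B.Reachable (T.state p) (T.counter p) := by
  obtain ⟨hexcl, hleaves, hresidue⟩ := hexp
  refine T.dom_induction fun p hp ih hbelow => ?_
  by_cases hleaf : T.IsLeaf p
  · rcases hleaves p hleaf with ⟨hfinal, hzero⟩ | hinc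
    · exact hzero ▸ reachable_zero hfinal
    · obtain ⟨u, hu⟩ := hinc.exists_anchor
      have := hu.strictPrefix.length_lt
      have := (hbelow p u hleaf (List.prefix_refl p) hu).length_le
      omega
  by_cases hanchor : ∃ v, T.IsLeaf v ∧ T.IsAnchorOf p v
  · obtain ⟨v, hv, hpv⟩ := hanchor
    obtain ⟨l, hl, hvl, hmod⟩ := hresidue v p hv hpv
    obtain ⟨s, rfl⟩ := hpv.strictPrefix.1
    have hside : ∀ q b, p <+: q → q ++ [b] <+: p ++ s → q ++ [!b] ∈ T.dom →
        B.Reachable (T.state (q ++ [!b])) (T.counter (q ++ [!b])) := fun q b hpq hqv hq =>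
      ih _ hq ⟨hpq.trans (List.prefix_append q _), fun e => by simpa [e] using hpq.length_le⟩
        (anchorsBelow_of_branch hexcl hv hpv hpq hqv)
    have hshift Δ (h : B.Reachable (T.state p) (T.counter (p ++ s) + Δ)) :=
      hT.reachable_add_of_path hv.1 hside Δ (hpv.state_eq ▸ h)
    exact of_modEq_of_shift_down hshift hpv.counter_lt.le hvl hmod (hpv.state_eq ▸ hl)
  · push Not at hanchor
    have hchild b (hb : p ++ [b] ∈ T.dom) :
        B.Reachable (T.state (p ++ [b])) (T.counter (p ++ [b])) :=
      ih _ hb ⟨List.prefix_append p _, by simp⟩ (hbelow.append_singleton hanchor b)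
    rcases hT p hp hleaf with ⟨h₀, h₁, hbr, hsum⟩ | ⟨h₀, -, z, hun, hz⟩
    · exact hsum ▸ (hchild false h₀).br hbr (hchild true h₁)
    · exact (hchild false h₀).un hun hz

theorem Expandable.reachable_root (hT : B.IsPRT T) (hexp : B.Expandable T) :
    B.Reachable (T.state []) (T.counter []) :=
  hexp.reachable_of_anchorsBelow hT [] T.root_mem fun _ _ _ _ _ => List.nil_prefix

end BVASS1

/-- In an expandable partial reachability tree, every node's label is reachable or
the subtree rooted there is not expandable; in particular the root label is reachable. -/
theorem stmt10 {Q : Type} (B : BVASS1 Q) (T : BTree Q)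
    (hT : B.IsPRT T) (hexp : B.Expandable T) :
    (∀ u (hu : u ∈ T.dom),
        B.Reachable (T.state u) (T.counter u) ∨ ¬ B.Expandable (T.subtree u hu)) ∧
      B.Reachable (T.state []) (T.counter []) :=
  ⟨fun u hu => or_iff_not_imp_right.2 fun h => by
      simpa [BTree.subtree, BTree.state, BTree.counter] using
        (not_not.1 h).reachable_root (hT.subtree hu),
    hexp.reachable_root hT⟩
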